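/- arXiv:1404.4825 — 5 statements merged into one kernel-verified Lean document; each statement's English description precedes it below -/
import Mathlib

section
/- Let L(q,p) = p²/2 + V(q) with V smooth, and let G(q,p) = η(q)·p with η smooth. Then the condition X_L²(G) = -2(cL + L₀)G, where X_L is the Hamiltonian vector field of L (so X_L(F) = p·∂F/∂q - V'(q)·∂F/∂p), holds identically in (q,p) if and only if η'' + c·η = 0 and 3V'η' + ηV'' - 2η(cV + L₀) = 0. -/
/-- Hamiltonian vector field of L = p²/2 + V(q) acting on a function F(q,p):
X_L(F) = p ∂_q F - V'(q) ∂_p F. -/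
noncomputable def XL (V : ℝ → ℝ) (F : ℝ → ℝ → ℝ) : ℝ → ℝ → ℝ :=
  fun q p => p * deriv (fun x => F x p) q - deriv V q * deriv (F q) p

lemma XL_G (V η : ℝ → ℝ) (hη : ContDiff ℝ (⊤ : ℕ∞) η) (q p : ℝ) :
    XL V (fun q' p' => η q' * p') q p = deriv η q * p ^ 2 - deriv V q * η q := by
  have hηd : DifferentiableAt ℝ η q := (hη.differentiable (by simp)) q
  have h1 : deriv (fun x => η x * p) q = deriv η q * p := by
    simp [deriv_mul_const hηd]
  have h2 : deriv (fun p' => η q * p') p = η q := by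
    simpa using ((hasDerivAt_id p).const_mul (η q)).deriv
  simp only [XL, h1, h2]
  ring

lemma XL_XL_G (V η : ℝ → ℝ) (hV : ContDiff ℝ (⊤ : ℕ∞) V) (hη : ContDiff ℝ (⊤ : ℕ∞) η) (q p : ℝ) :
    XL V (XL V (fun q' p' => η q' * p')) q p =
      deriv (deriv η) q * p ^ 3
        - (deriv (deriv V) q * η q + 3 * deriv V q * deriv η q) * p := by
  have hVd : Differentiable ℝ V := hV.differentiable (by simp)
  have hηd : Differentiable ℝ η := hη.differentiable (by simp)
  have hVi : ContDiff ℝ (↑(⊤:ℕ∞)) V := hV.of_le (by simp)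
  have hηi : ContDiff ℝ (↑(⊤:ℕ∞)) η := hη.of_le (by simp)
  have hV' : Differentiable ℝ (deriv V) :=
    ((contDiff_infty_iff_deriv.mp hVi).2.differentiable (by simp))
  have hη' : Differentiable ℝ (deriv η) :=
    ((contDiff_infty_iff_deriv.mp hηi).2.differentiable (by simp))
  have e1 : (fun x => XL V (fun q' p' => η q' * p') x p)
      = fun x => deriv η x * p ^ 2 - deriv V x * η x := by
    funext x; exact XL_G V η hη x p
  have e2 : (XL V (fun q' p' => η q' * p') q)
      = fun p' => deriv η q * p' ^ 2 - deriv V q * η q := by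
    funext p'; exact XL_G V η hη q p'
  show p * deriv (fun x => XL V (fun q' p' => η q' * p') x p) q
      - deriv V q * deriv (XL V (fun q' p' => η q' * p') q) p = _
  rw [e1, e2]
  have d1 : deriv (fun x => deriv η x * p ^ 2 - deriv V x * η x) q
      = deriv (deriv η) q * p ^ 2 - (deriv (deriv V) q * η q + deriv V q * deriv η q) := by
    rw [deriv_fun_sub ((hη' q).mul_const _) ((hV' q).fun_mul (hηd q)),
      deriv_mul_const (hη' q), deriv_fun_mul (hV' q) (hηd q)]
  have d2 : deriv (fun p' => deriv η q * p' ^ 2 - deriv V q * η q) p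
      = deriv η q * (2 * p) := by
    rw [deriv_fun_sub ((differentiable_pow 2).const_mul _ |>.differentiableAt)
      (differentiableAt_const _), deriv_const_mul _ (differentiableAt_pow 2)]
    simp [deriv_pow]
  rw [d1, d2]; ring

theorem linear_G_extension_condition (V η : ℝ → ℝ) (c L₀ : ℝ)
    (hV : ContDiff ℝ (⊤ : ℕ∞) V) (hη : ContDiff ℝ (⊤ : ℕ∞) η) :
    (∀ q p : ℝ, XL V (XL V (fun q' p' => η q' * p')) q p =
        -2 * (c * (p^2 / 2 + V q) + L₀) * (η q * p)) ↔
      ((∀ q, deriv (deriv η) q + c * η q = 0) ∧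
       (∀ q, 3 * deriv V q * deriv η q + η q * deriv (deriv V) q
          - 2 * η q * (c * V q + L₀) = 0)) := by
  constructor
  · intro H
    have key : ∀ q p : ℝ,
        deriv (deriv η) q * p ^ 3
          - (deriv (deriv V) q * η q + 3 * deriv V q * deriv η q) * p =
          -2 * (c * (p^2 / 2 + V q) + L₀) * (η q * p) := by
      intro q p; rw [← XL_XL_G V η hV hη]; exact H q p
    constructor
    · intro q
      have h1 := key q 1
      have h2 := key q 2
      ring_nf at h1 h2 ⊢
      linarith
    · intro q
      have h1 := key q 1
      have h2 := key q 2
      ring_nf at h1 h2 ⊢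
      linarith
  · rintro ⟨h1, h2⟩ q p
    rw [XL_XL_G V η hV hη]
    linear_combination p ^ 3 * h1 q - p * h2 q
end

section
/- Let L be a smooth function on a Poisson manifold and G a smooth function satisfying X_L²(G) = Λ G where Λ = -2(cL + L₀) (note X_L(Λ) = 0). Define the recursion G₁ = G, G_{n+1} = X_L(G)·G_n + (1/n)·G·X_L(G_n). Then each G_n satisfies X_L²(G_n) = n²·Λ·G_n, i.e., X_L²(G_n) = -2n²(cL + L₀)G_n. -/
/-!
Write `H = X G * F + c⁻¹ • (G * X F)`. Because `X` kills `Λ`, two applications of the Leibniz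
rule together with `X² G = Λ G` and `X² F = c² Λ F` give first
`X H = (c + 1) • (Λ * G * F + c⁻¹ • (X G * X F))` and then `X² H = (c + 1)² • (Λ * H)`.
With `c = n` and `F = G_n` this is the induction step `G_n ↦ G_{n+1}`.
-/

namespace Derivation

variable {K A : Type*} [Field K] [CommRing A] [Algebra K A] (X : Derivation K A A) {Λ G F : A}
  {c : K}

theorem apply_mul_add_inv_smul (hG : X (X G) = Λ * G) (hc : c ≠ 0)
    (hF : X (X F) = c ^ 2 • (Λ * F)) :
    X (X G * F + c⁻¹ • (G * X F)) = (c + 1) • (Λ * G * F + c⁻¹ • (X G * X F)) := by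
  have hinv : algebraMap K A c * algebraMap K A c⁻¹ = 1 := by
    rw [← map_mul, mul_inv_cancel₀ hc, map_one]
  simp only [map_add, map_smul, leibniz, hG, hF, smul_eq_mul]
  simp only [Algebra.smul_def, map_add, map_one, map_pow]
  linear_combination (Λ * G * F * algebraMap K A c - X G * X F) * hinv

theorem apply_apply_mul_add_inv_smul (hΛ : X Λ = 0) (hG : X (X G) = Λ * G) (hc : c ≠ 0)
    (hF : X (X F) = c ^ 2 • (Λ * F)) :
    X (X (X G * F + c⁻¹ • (G * X F))) =
      (c + 1) ^ 2 • (Λ * (X G * F + c⁻¹ • (G * X F))) := by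
  have hinv : algebraMap K A c * algebraMap K A c⁻¹ = 1 := by
    rw [← map_mul, mul_inv_cancel₀ hc, map_one]
  rw [X.apply_mul_add_inv_smul hG hc hF]
  simp only [map_add, map_smul, leibniz, hΛ, hG, hF, smul_eq_mul]
  simp only [Algebra.smul_def, map_add, map_one, map_pow]
  linear_combination
    (1 + algebraMap K A c) * (algebraMap K A c * Λ * F * X G - Λ * G * X F) * hinv

end Derivation

theorem recursion_preserves_eigenproperty
    {A : Type*} [CommRing A] [Algebra ℚ A]
    (X : Derivation ℚ A A) (Λ G : A)
    (hΛ : X Λ = 0) (hG : X (X G) = Λ * G)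
    (Gseq : ℕ → A) (h1 : Gseq 1 = G)
    (hrec : ∀ n : ℕ, 1 ≤ n →
      Gseq (n + 1) = X G * Gseq n + ((n : ℚ)⁻¹) • (G * X (Gseq n))) :
    ∀ n : ℕ, 1 ≤ n → X (X (Gseq n)) = ((n : ℚ)^2) • (Λ * Gseq n) := by
  intro n hn
  induction n, hn using Nat.le_induction with
  | base => simp [h1, hG]
  | succ n hn ih =>
    have hn0 : (n : ℚ) ≠ 0 := Nat.cast_ne_zero.mpr (by omega)
    rw [hrec n hn, X.apply_apply_mul_add_inv_smul hΛ hG hn0 ih, Nat.cast_succ]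
end

section
/- For c = 1, κ = 0, so that γ(u) = 1/u, α(u) = 1/u², the modified (2m,n)-extension of L = (1/2)p_q² + (c₁ + c₂ cos q)/sin² q, namely H̄ = (1/2)p_u² + (4m²/(n²u²))·L + ωu², equals under the substitutions q = 2λθ, λ = m/n, c₁ = (α₁+α₂)/(2λ²), c₂ = (α₂-α₁)/(2λ²), p_q = p_θ/(2λ), the complete TTW Hamiltonian H = (1/2)p_u² + (1/u²)((1/2)p_θ² + α₁/cos²(λθ) + α₂/sin²(λθ)) + ωu². -/
theorem ttw_as_modified_extension (m n : ℕ) (hm : 0 < m) (hn : 0 < n)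
    (lam ω α₁ α₂ c₁ c₂ : ℝ) (hlam : lam = (m : ℝ) / n)
    (hc₁ : c₁ = (α₁ + α₂) / (2 * lam^2)) (hc₂ : c₂ = (α₂ - α₁) / (2 * lam^2)) :
    ∀ u θ pu pθ : ℝ, u ≠ 0 →
      Real.sin (lam * θ) ≠ 0 → Real.cos (lam * θ) ≠ 0 →
      (1/2) * pu^2
        + (4 * (m:ℝ)^2 / ((n:ℝ)^2 * u^2)) *
            ((1/2) * (pθ / (2 * lam))^2
              + (c₁ + c₂ * Real.cos (2 * lam * θ)) / (Real.sin (2 * lam * θ))^2)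
        + ω * u^2
      = (1/2) * pu^2
          + (1 / u^2) *
              ((1/2) * pθ^2 + α₁ / (Real.cos (lam * θ))^2 + α₂ / (Real.sin (lam * θ))^2)
          + ω * u^2 := by
  intro u θ pu pθ hu hs hc
  have hm' : (m : ℝ) ≠ 0 := Nat.cast_ne_zero.mpr hm.ne'
  have hn' : (n : ℝ) ≠ 0 := Nat.cast_ne_zero.mpr hn.ne'
  have hl : lam ≠ 0 := by rw [hlam]; exact div_ne_zero hm' hn'
  set S := Real.sin (lam * θ) with hS
  set C := Real.cos (lam * θ) with hC
  have hpy : S ^ 2 + C ^ 2 = 1 := Real.sin_sq_add_cos_sq _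
  have h2 : 2 * lam * θ = 2 * (lam * θ) := by ring
  have hcos2 : c₁ + c₂ * Real.cos (2 * lam * θ) = (α₁ * S^2 + α₂ * C^2) / lam^2 := by
    rw [h2, Real.cos_two_mul, hc₁, hc₂, ← hC]
    field_simp
    linear_combination (-2 * α₁) * hpy
  have hsin2 : (Real.sin (2 * lam * θ))^2 = 4 * S^2 * C^2 := by
    rw [h2, Real.sin_two_mul, ← hS, ← hC]; ring
  have hml : (m : ℝ)^2 = lam^2 * (n : ℝ)^2 := by rw [hlam]; field_simp
  rw [hcos2, hsin2, hml]
  field_simp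
  ring
end

section
/- Define on ℝ⁴ with canonical coordinates (u, q, p_u, p_q) the Hamiltonian H̄ = (1/2)p_u² + (4/u²)((1/2)p_q² + (c₁ + c₂cos q)/sin²q) + ωu² and the function K̄ = p_q p_u² sin q + (4/u)p_u p_q² cos q - (4/u²)p_q³ sin q + (4/u)p_u (c₂(cos²q + 1) + 2c₁ cos q)/sin²q + (2/u²)p_q (ωu⁴ sin²q - 4(c₁ + c₂ cos q))/sin q. Then the canonical Poisson bracket {H̄, K̄} vanishes identically on the domain u ≠ 0, sin q ≠ 0. -/
/-- The TTW Hamiltonian for λ = 1 in coordinates (u, q, p_u, p_q). -/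
noncomputable def Hbar (c₁ c₂ ω u q pu pq : ℝ) : ℝ :=
  (1/2) * pu^2
    + (4 / u^2) * ((1/2) * pq^2 + (c₁ + c₂ * Real.cos q) / (Real.sin q)^2)
    + ω * u^2

/-- The explicit first integral of the TTW system for λ = 1. -/
noncomputable def Kbar (c₁ c₂ ω u q pu pq : ℝ) : ℝ :=
  pq * pu^2 * Real.sin q
    + (4 / u) * pu * pq^2 * Real.cos q
    - (4 / u^2) * pq^3 * Real.sin q
    + (4 / u) * pu * (c₂ * ((Real.cos q)^2 + 1) + 2 * c₁ * Real.cos q) / (Real.sin q)^2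
    + (2 / u^2) * pq * (ω * u^4 * (Real.sin q)^2 - 4 * (c₁ + c₂ * Real.cos q)) / Real.sin q

open Real

theorem hasDerivAt_potential_div_sin_sq (c₁ c₂ q : ℝ) (hs : sin q ≠ 0) :
    HasDerivAt (fun q' => (c₁ + c₂ * cos q') / sin q' ^ 2)
      (-(c₂ * (cos q ^ 2 + 1) + 2 * c₁ * cos q) / sin q ^ 3) q :=
  ((((hasDerivAt_cos q).const_mul c₂).const_add c₁).div ((hasDerivAt_sin q).fun_pow 2)
    (pow_ne_zero 2 hs)).congr_deriv <| by
      simp only [Nat.cast_ofNat, Nat.add_one_sub_one, pow_one]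
      field_simp
      linear_combination -c₂ * sin_sq_add_cos_sq q

section PartialDerivatives

variable (c₁ c₂ ω u q pu pq : ℝ)

theorem hasDerivAt_Hbar_pu : HasDerivAt (fun pu' => Hbar c₁ c₂ ω u q pu' pq) pu pu := by
  refine ((((hasDerivAt_pow 2 pu).const_mul (1 / 2 : ℝ)).add_const
    ((4 / u ^ 2) * ((1 / 2) * pq ^ 2 + (c₁ + c₂ * cos q) / sin q ^ 2))).add_const
    (ω * u ^ 2)).congr_deriv ?_
  ring

theorem hasDerivAt_Hbar_pq : HasDerivAt (fun pq' => Hbar c₁ c₂ ω u q pu pq') (4 * pq / u ^ 2) pq := by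
  refine (((((hasDerivAt_pow 2 pq).const_mul (1 / 2 : ℝ)).add_const
    ((c₁ + c₂ * cos q) / sin q ^ 2)).const_mul (4 / u ^ 2)).const_add ((1 / 2) * pu ^ 2)).add_const
    (ω * u ^ 2) |>.congr_deriv ?_
  ring

theorem hasDerivAt_Hbar_u (hu : u ≠ 0) :
    HasDerivAt (fun u' => Hbar c₁ c₂ ω u' q pu pq)
      (-8 / u ^ 3 * ((1 / 2) * pq ^ 2 + (c₁ + c₂ * cos q) / sin q ^ 2) + 2 * ω * u) u := by
  refine ((((hasDerivAt_const u (4 : ℝ)).div (hasDerivAt_pow 2 u) (pow_ne_zero 2 hu)).mul_const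
    ((1 / 2) * pq ^ 2 + (c₁ + c₂ * cos q) / sin q ^ 2)).const_add ((1 / 2) * pu ^ 2)).add
    ((hasDerivAt_pow 2 u).const_mul ω) |>.congr_deriv ?_
  field_simp
  ring

theorem hasDerivAt_Hbar_q (hs : sin q ≠ 0) :
    HasDerivAt (fun q' => Hbar c₁ c₂ ω u q' pu pq)
      (-4 / u ^ 2 * (c₂ * (cos q ^ 2 + 1) + 2 * c₁ * cos q) / sin q ^ 3) q := by
  refine ((((hasDerivAt_potential_div_sin_sq c₁ c₂ q hs).const_add ((1 / 2) * pq ^ 2)).const_mul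
    (4 / u ^ 2)).const_add ((1 / 2) * pu ^ 2)).add_const (ω * u ^ 2) |>.congr_deriv ?_
  ring

theorem hasDerivAt_Kbar_pu :
    HasDerivAt (fun pu' => Kbar c₁ c₂ ω u q pu' pq)
      (2 * pq * pu * sin q + 4 / u * pq ^ 2 * cos q
        + 4 / u * (c₂ * (cos q ^ 2 + 1) + 2 * c₁ * cos q) / sin q ^ 2) pu := by
  have t₁ := ((hasDerivAt_pow 2 pu).const_mul pq).mul_const (sin q)
  have t₂ := (((hasDerivAt_id' pu).const_mul (4 / u)).mul_const (pq ^ 2)).mul_const (cos q)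
  have t₃ := hasDerivAt_const pu (4 / u ^ 2 * pq ^ 3 * sin q)
  have t₄ := (((hasDerivAt_id' pu).const_mul (4 / u)).mul_const
    (c₂ * (cos q ^ 2 + 1) + 2 * c₁ * cos q)).div_const (sin q ^ 2)
  have t₅ := hasDerivAt_const pu
    (2 / u ^ 2 * pq * (ω * u ^ 4 * sin q ^ 2 - 4 * (c₁ + c₂ * cos q)) / sin q)
  refine ((((t₁.fun_add t₂).fun_sub t₃).fun_add t₄).fun_add t₅).congr_deriv ?_
  ring

theorem hasDerivAt_Kbar_pq :
    HasDerivAt (fun pq' => Kbar c₁ c₂ ω u q pu pq')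
      (pu ^ 2 * sin q + 8 / u * pu * pq * cos q - 12 / u ^ 2 * pq ^ 2 * sin q
        + 2 / u ^ 2 * (ω * u ^ 4 * sin q ^ 2 - 4 * (c₁ + c₂ * cos q)) / sin q) pq := by
  have t₁ := ((hasDerivAt_id' pq).mul_const (pu ^ 2)).mul_const (sin q)
  have t₂ := ((hasDerivAt_pow 2 pq).const_mul (4 / u * pu)).mul_const (cos q)
  have t₃ := ((hasDerivAt_pow 3 pq).const_mul (4 / u ^ 2)).mul_const (sin q)
  have t₄ := hasDerivAt_const pq
    (4 / u * pu * (c₂ * (cos q ^ 2 + 1) + 2 * c₁ * cos q) / sin q ^ 2)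
  have t₅ := (((hasDerivAt_id' pq).const_mul (2 / u ^ 2)).mul_const
    (ω * u ^ 4 * sin q ^ 2 - 4 * (c₁ + c₂ * cos q))).div_const (sin q)
  refine ((((t₁.fun_add t₂).fun_sub t₃).fun_add t₄).fun_add t₅).congr_deriv ?_
  ring

theorem hasDerivAt_Kbar_u (hu : u ≠ 0) :
    HasDerivAt (fun u' => Kbar c₁ c₂ ω u' q pu pq)
      (-4 / u ^ 2 * pu * pq ^ 2 * cos q + 8 / u ^ 3 * pq ^ 3 * sin q
        - 4 / u ^ 2 * pu * (c₂ * (cos q ^ 2 + 1) + 2 * c₁ * cos q) / sin q ^ 2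
        + 4 * pq * (ω * u ^ 4 * sin q ^ 2 + 4 * (c₁ + c₂ * cos q)) / (u ^ 3 * sin q)) u := by
  have inv := (hasDerivAt_const u (4 : ℝ)).fun_div (hasDerivAt_id' u) hu
  have inv_sq := fun a : ℝ => (hasDerivAt_const u a).fun_div (hasDerivAt_pow 2 u) (pow_ne_zero 2 hu)
  have t₁ := hasDerivAt_const u (pq * pu ^ 2 * sin q)
  have t₂ := ((inv.mul_const pu).mul_const (pq ^ 2)).mul_const (cos q)
  have t₃ := ((inv_sq 4).mul_const (pq ^ 3)).mul_const (sin q)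
  have t₄ := ((inv.mul_const pu).mul_const (c₂ * (cos q ^ 2 + 1) + 2 * c₁ * cos q)).div_const
    (sin q ^ 2)
  have t₅ := (((inv_sq 2).mul_const pq).fun_mul
    ((((hasDerivAt_pow 4 u).const_mul ω).mul_const (sin q ^ 2)).sub_const
      (4 * (c₁ + c₂ * cos q)))).div_const (sin q)
  refine ((((t₁.fun_add t₂).fun_sub t₃).fun_add t₄).fun_add t₅).congr_deriv ?_
  field_simp
  ring

theorem hasDerivAt_Kbar_q (hs : sin q ≠ 0) :
    HasDerivAt (fun q' => Kbar c₁ c₂ ω u q' pu pq)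
      (pq * pu ^ 2 * cos q - 4 / u * pu * pq ^ 2 * sin q - 4 / u ^ 2 * pq ^ 3 * cos q
        - 8 / u * pu * ((c₁ + c₂ * cos q) / sin q
            + cos q * (c₂ * (cos q ^ 2 + 1) + 2 * c₁ * cos q) / sin q ^ 3)
        + 2 / u ^ 2 * pq * (ω * u ^ 4 * cos q + 4 * c₂ + 4 * cos q * (c₁ + c₂ * cos q) / sin q ^ 2))
      q := by
  have hsin := hasDerivAt_sin q
  have hcos := hasDerivAt_cos q
  have t₁ := hsin.const_mul (pq * pu ^ 2)
  have t₂ := hcos.const_mul (4 / u * pu * pq ^ 2)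
  have t₃ := hsin.const_mul (4 / u ^ 2 * pq ^ 3)
  have t₄ := (((((hcos.fun_pow 2).add_const 1).const_mul c₂).fun_add
    (hcos.const_mul (2 * c₁))).const_mul (4 / u * pu)).fun_div (hsin.fun_pow 2) (pow_ne_zero 2 hs)
  have t₅ := ((((hsin.fun_pow 2).const_mul (ω * u ^ 4)).fun_sub
    (((hcos.const_mul c₂).const_add c₁).const_mul 4)).const_mul (2 / u ^ 2 * pq)).fun_div hsin hs
  refine ((((t₁.fun_add t₂).fun_sub t₃).fun_add t₄).fun_add t₅).congr_deriv ?_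
  field_simp
  ring

end PartialDerivatives

theorem ttw_first_integral_poisson_commutes (c₁ c₂ ω : ℝ) :
    ∀ u q pu pq : ℝ, u ≠ 0 → Real.sin q ≠ 0 →
      deriv (fun q' => Hbar c₁ c₂ ω u q' pu pq) q
          * deriv (fun pq' => Kbar c₁ c₂ ω u q pu pq') pq
        - deriv (fun pq' => Hbar c₁ c₂ ω u q pu pq') pq
          * deriv (fun q' => Kbar c₁ c₂ ω u q' pu pq) q
        + deriv (fun u' => Hbar c₁ c₂ ω u' q pu pq) u
          * deriv (fun pu' => Kbar c₁ c₂ ω u q pu' pq) pu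
        - deriv (fun pu' => Hbar c₁ c₂ ω u q pu' pq) pu
          * deriv (fun u' => Kbar c₁ c₂ ω u' q pu pq) u
        = 0 := by
  intro u q pu pq hu hs
  rw [(hasDerivAt_Hbar_q c₁ c₂ ω u q pu pq hs).deriv, (hasDerivAt_Kbar_pq c₁ c₂ ω u q pu pq).deriv,
    (hasDerivAt_Hbar_pq c₁ c₂ ω u q pu pq).deriv, (hasDerivAt_Kbar_q c₁ c₂ ω u q pu pq hs).deriv,
    (hasDerivAt_Hbar_u c₁ c₂ ω u q pu pq hu).deriv, (hasDerivAt_Kbar_pu c₁ c₂ ω u q pu pq).deriv,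
    (hasDerivAt_Hbar_pu c₁ c₂ ω u q pu pq).deriv, (hasDerivAt_Kbar_u c₁ c₂ ω u q pu pq hu).deriv]
  field_simp
  -- after clearing denominators, only the Pythagorean identity is left to use
  linear_combination -64 * c₂ * sin q ^ 2 * pq ^ 2 * sin_sq_add_cos_sq q
end

section
/- Let G(q,p) = p·sin q and L = (1/2)p² + (c₁ + c₂ cos q)/sin² q on the domain sin q ≠ 0. Then X_L²(G) = -2L·G, where X_L(F) = p ∂_q F - V'(q) ∂_p F with V(q) = (c₁ + c₂ cos q)/sin² q. (This verifies equation X_L²(G) = -2(cL + L₀)G with c = 1, L₀ = 0 for the TTW building block.) -/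
/-!
For any potential `V`, applying `X_L` twice to `G = p sin q` gives
`X_L² G = -p³ sin q - p ((V' sin)' + 2 V' cos)`, so the claim is the identity
`(V' sin)' + 2 V' cos = 2 V sin`. Writing `V = W / sin²`, this identity is equivalent to
`W'' sin = W' cos`, which holds for `W = c₁ + c₂ cos`. Concretely,
`V' sin = -(c₂ + 2 c₁ cos + c₂ cos²) / sin²` near `q`, and its derivative is computed directly.
-/

open Real Filter Topology

theorem XL_mul_left (V f : ℝ → ℝ) :
    XL V (fun q p => p * f q) = fun q p => p ^ 2 * deriv f q - deriv V q * f q := by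
  ext q p
  simp only [XL, deriv_const_mul_field', deriv_mul_const_field', deriv_id'']
  ring

theorem XL_sq_mul_sub_apply {V g h : ℝ → ℝ} {q : ℝ} (hg : DifferentiableAt ℝ g q)
    (hh : DifferentiableAt ℝ h q) (p : ℝ) :
    XL V (fun q p => p ^ 2 * g q - h q) q p
      = p * (p ^ 2 * deriv g q - deriv h q) - deriv V q * (2 * p * g q) := by
  have hq : HasDerivAt (fun x => p ^ 2 * g x - h x) (p ^ 2 * deriv g q - deriv h q) q :=
    (hg.hasDerivAt.const_mul _).sub hh.hasDerivAt
  have hp : HasDerivAt (fun p => p ^ 2 * g q - h q) (2 * p * g q) p := by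
    simpa using ((hasDerivAt_pow 2 p).mul_const (g q)).sub_const (h q)
  simp only [XL, hq.deriv, hp.deriv]

noncomputable def ttwPotential (c₁ c₂ q : ℝ) : ℝ := (c₁ + c₂ * cos q) / sin q ^ 2

section

variable (c₁ c₂ : ℝ) {q : ℝ}

theorem hasDerivAt_ttwPotential (hq : sin q ≠ 0) :
    HasDerivAt (ttwPotential c₁ c₂) (-(c₂ + 2 * c₁ * cos q + c₂ * cos q ^ 2) / sin q ^ 3) q := by
  refine ((((hasDerivAt_cos q).const_mul c₂).const_add c₁).fun_div
    ((hasDerivAt_sin q).fun_pow 2) (pow_ne_zero 2 hq)).congr_deriv ?_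
  field_simp
  norm_num
  linear_combination (-c₂ * sin q) * sin_sq_add_cos_sq q

theorem deriv_ttwPotential_mul_sin_eventuallyEq (hq : sin q ≠ 0) :
    (fun x => deriv (ttwPotential c₁ c₂) x * sin x)
      =ᶠ[𝓝 q] fun x => -(c₂ + 2 * c₁ * cos x + c₂ * cos x ^ 2) / sin x ^ 2 := by
  filter_upwards [continuous_sin.continuousAt.eventually_ne hq] with x hx
  rw [(hasDerivAt_ttwPotential c₁ c₂ hx).deriv]
  field_simp

theorem hasDerivAt_deriv_ttwPotential_mul_sin (hq : sin q ≠ 0) :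
    HasDerivAt (fun x => deriv (ttwPotential c₁ c₂) x * sin x)
      (2 * ttwPotential c₁ c₂ q * sin q - 2 * deriv (ttwPotential c₁ c₂) q * cos q) q := by
  have hN := (((((hasDerivAt_cos q).const_mul (2 * c₁)).const_add c₂).fun_add
      (((hasDerivAt_cos q).fun_pow 2).const_mul c₂)).fun_neg)
  refine ((hN.fun_div ((hasDerivAt_sin q).fun_pow 2) (pow_ne_zero 2 hq)).congr_of_eventuallyEq
    (deriv_ttwPotential_mul_sin_eventuallyEq c₁ c₂ hq)).congr_deriv ?_
  rw [(hasDerivAt_ttwPotential c₁ c₂ hq).deriv, ttwPotential]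
  field_simp
  norm_num
  ring

end

theorem ttw_building_block_eigenfunction (c₁ c₂ : ℝ) :
    ∀ q p : ℝ, Real.sin q ≠ 0 →
      XL (fun q' => (c₁ + c₂ * Real.cos q') / (Real.sin q')^2)
        (XL (fun q' => (c₁ + c₂ * Real.cos q') / (Real.sin q')^2)
          (fun q' p' => p' * Real.sin q')) q p
      = -2 * ((1/2) * p^2 + (c₁ + c₂ * Real.cos q) / (Real.sin q)^2) * (p * Real.sin q) := by
  intro q p hq
  change XL (ttwPotential c₁ c₂) (XL (ttwPotential c₁ c₂) fun q p => p * sin q) q p = _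
  have hV := hasDerivAt_deriv_ttwPotential_mul_sin c₁ c₂ hq
  rw [XL_mul_left, Real.deriv_sin, XL_sq_mul_sub_apply differentiableAt_cos hV.differentiableAt,
    hV.deriv, Real.deriv_cos, ttwPotential]
  ring
end
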